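/- Let d ≥ 1, σ > 0, and let π be a finite Borel measure on ℝ^d with ∫‖x‖ dπ(x) < ∞. Then the kernel mean embedding v0 : ℝ^d → ℝ is differentiable at every y ∈ ℝ^d with gradient ∇v0(y) = σ^{-2} ( v1(y) − y · v0(y) ). Consequently, if π is nonzero then v0(y) > 0 for every y and σ² ∇(log v0)(y) = v1(y)/v0(y) − y. -/

import Mathlib

open MeasureTheory

noncomputable section

abbrev Euc (d : ℕ) := EuclideanSpace ℝ (Fin d)

/-- The squared-exponential (Gaussian) kernel with bandwidth `σ`. -/
def ker {d : ℕ} (σ : ℝ) (x y : Euc d) : ℝ := Real.exp (-‖x - y‖ ^ 2 / (2 * σ ^ 2))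

/-- Kernel mean embedding `v0(y) = ∫ κ(x,y) dπ(x)`. -/
def v0 {d : ℕ} (σ : ℝ) (π : Measure (Euc d)) (y : Euc d) : ℝ := ∫ x, ker σ x y ∂π

/-- Kernel embedding of the first moment `v1(y) = ∫ x κ(x,y) dπ(x)`. -/
def v1 {d : ℕ} (σ : ℝ) (π : Measure (Euc d)) (y : Euc d) : Euc d := ∫ x, ker σ x y • x ∂π

/-
Since `0 < κ ≤ 1` and `∇_y κ(x, y) = σ⁻² κ(x, y) (x - y)`, the `y`-gradient of the integrand is
bounded on the unit ball around `y₀` by `σ⁻² (‖x‖ + ‖y₀‖ + 1)`, which is `π`-integrable by the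
first-moment assumption; so `v0` may be differentiated under the integral sign. The logarithmic
gradient then follows from the chain rule, as `v0 > 0` once `π ≠ 0`.
-/

section Gradient

open InnerProductSpace

variable {H : Type*} [NormedAddCommGroup H] [InnerProductSpace ℝ H] [CompleteSpace H]

theorem HasGradientAt.log {f : H → ℝ} {g : H} {x : H} (hf : HasGradientAt f g x)
    (hx : f x ≠ 0) : HasGradientAt (fun y => Real.log (f y)) ((f x)⁻¹ • g) x := by
  rw [hasGradientAt_iff_hasFDerivAt, map_smul]
  exact hf.hasFDerivAt.log hx

theorem hasGradientAt_integral_of_dominated_of_gradient_le {α : Type*} [MeasurableSpace α]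
    {μ : Measure α} {F : H → α → ℝ} {G : H → α → H} {x₀ : H} {s : Set H} {bound : α → ℝ}
    (hs : s ∈ nhds x₀)
    (hF_meas : ∀ᶠ x in nhds x₀, AEStronglyMeasurable (F x) μ) (hF_int : Integrable (F x₀) μ)
    (hG_meas : AEStronglyMeasurable (G x₀) μ)
    (h_bound : ∀ᵐ a ∂μ, ∀ x ∈ s, ‖G x a‖ ≤ bound a)
    (bound_integrable : Integrable bound μ)
    (h_diff : ∀ᵐ a ∂μ, ∀ x ∈ s, HasGradientAt (F · a) (G x a) x) :
    HasGradientAt (fun x => ∫ a, F x a ∂μ) (∫ a, G x₀ a ∂μ) x₀ := by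
  have key := hasFDerivAt_integral_of_dominated_of_fderiv_le (F' := fun x a => toDual ℝ H (G x a))
    hs hF_meas hF_int ((toDual ℝ H).continuous.comp_aestronglyMeasurable hG_meas)
    (by simpa only [LinearIsometryEquiv.norm_map] using h_bound) bound_integrable h_diff
  exact key.congr_fderiv ((toDual ℝ H).toLinearIsometry.integral_comp_comm _)

end Gradient

theorem ker_pos {d : ℕ} (σ : ℝ) (x y : Euc d) : 0 < ker σ x y := Real.exp_pos _

theorem ker_le_one {d : ℕ} (σ : ℝ) (x y : Euc d) : ker σ x y ≤ 1 :=
  Real.exp_le_one_iff.2 <| div_nonpos_of_nonpos_of_nonneg (by simp) (by positivity)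

theorem continuous_ker_left {d : ℕ} (σ : ℝ) (y : Euc d) : Continuous (ker σ · y) := by
  unfold ker
  fun_prop

open ContinuousLinearMap InnerProductSpace in
theorem hasGradientAt_ker {d : ℕ} (σ : ℝ) (x z : Euc d) :
    HasGradientAt (ker σ x) ((σ ^ 2)⁻¹ • ker σ x z • (x - z)) z := by
  have h := (((hasFDerivAt_id z).const_sub x).norm_sq.neg.mul_const (2 * σ ^ 2)⁻¹).exp
  simp only [← div_eq_mul_inv] at h
  rw [hasGradientAt_iff_hasFDerivAt]
  refine h.congr_fderiv ?_
  ext v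
  simp only [id_eq, Pi.neg_apply, mul_inv_rev, map_sub, ContinuousLinearMap.comp_neg,
    ContinuousLinearMap.comp_id, neg_sub, smul_neg, neg_apply, smul_apply, sub_apply,
    coe_innerSL_apply, nsmul_eq_mul, Nat.cast_ofNat, smul_eq_mul, ker, map_smul, toDual_apply_apply]
  ring

theorem norm_ker_smul_le {d : ℕ} {E : Type*} [NormedAddCommGroup E] [NormedSpace ℝ E] (σ : ℝ)
    (x y : Euc d) (w : E) : ‖ker σ x y • w‖ ≤ ‖w‖ := by
  rw [norm_smul, Real.norm_of_nonneg (ker_pos σ x y).le]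
  exact mul_le_of_le_one_left (norm_nonneg w) (ker_le_one σ x y)

section Embedding

variable {d : ℕ} (σ : ℝ) {π : Measure (Euc d)} [IsFiniteMeasure π]

theorem integrable_ker (y : Euc d) : Integrable (ker σ · y) π :=
  (integrable_const (1 : ℝ)).mono' (continuous_ker_left σ y).aestronglyMeasurable <|
    .of_forall fun x => by simpa using norm_ker_smul_le σ x y (1 : ℝ)

theorem integrable_ker_smul (hπ : Integrable (fun x => ‖x‖) π) (y w : Euc d) :
    Integrable (fun x => ker σ x y • (x - w)) π :=
  (hπ.add (integrable_const ‖w‖)).mono'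
    ((continuous_ker_left σ y).smul (continuous_id.sub continuous_const)).aestronglyMeasurable <|
    .of_forall fun x => (norm_ker_smul_le σ x y _).trans (norm_sub_le x w)

theorem integral_ker_smul_sub (hπ : Integrable (fun x => ‖x‖) π) (y : Euc d) :
    ∫ x, ker σ x y • (x - y) ∂π = v1 σ π y - v0 σ π y • y := by
  simp_rw [smul_sub]
  rw [integral_sub (by simpa using integrable_ker_smul σ hπ y 0)
    ((integrable_ker σ y).smul_const y), integral_smul_const]
  rfl

theorem hasGradientAt_v0 (hπ : Integrable (fun x => ‖x‖) π) (y : Euc d) :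
    HasGradientAt (v0 σ π) ((σ ^ 2)⁻¹ • (v1 σ π y - v0 σ π y • y)) y := by
  have hball : ∀ z ∈ Metric.ball y 1, ∀ x : Euc d,
      ‖(σ ^ 2)⁻¹ • ker σ x z • (x - z)‖ ≤ (σ ^ 2)⁻¹ * (‖x‖ + (‖y‖ + 1)) := by
    intro z hz x
    rw [norm_smul, Real.norm_of_nonneg (by positivity)]
    gcongr
    calc ‖ker σ x z • (x - z)‖ ≤ ‖x - z‖ := norm_ker_smul_le σ x z _
      _ ≤ ‖x‖ + ‖z‖ := norm_sub_le x z
      _ ≤ ‖x‖ + (‖y‖ + 1) := by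
        have := norm_le_norm_add_norm_sub' z y
        rw [Metric.mem_ball, dist_eq_norm] at hz
        linarith
  have h := hasGradientAt_integral_of_dominated_of_gradient_le (μ := π)
    (G := fun z x => (σ ^ 2)⁻¹ • ker σ x z • (x - z)) (Metric.ball_mem_nhds y one_pos)
    (.of_forall fun z => (continuous_ker_left σ z).aestronglyMeasurable) (integrable_ker σ y)
    ((integrable_ker_smul σ hπ y y).smul (σ ^ 2)⁻¹).aestronglyMeasurable
    (.of_forall fun x z hz => hball z hz x) ((hπ.add (integrable_const _)).const_mul _)
    (.of_forall fun x z _ => hasGradientAt_ker σ x z)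
  rwa [integral_smul, integral_ker_smul_sub σ hπ] at h

theorem v0_pos (hπ : π ≠ 0) (y : Euc d) : 0 < v0 σ π y := by
  rw [v0, integral_pos_iff_support_of_nonneg (fun x => (ker_pos σ x y).le) (integrable_ker σ y),
    Function.support_eq_univ fun x => (ker_pos σ x y).ne']
  exact Measure.measure_univ_pos.2 hπ

end Embedding

theorem v0_gradient_general
    (d : ℕ) (σ : ℝ) (hσ : 0 < σ)
    (π : Measure (Euc d)) [IsFiniteMeasure π] (hπ : Integrable (fun x => ‖x‖) π) :
    (∀ y : Euc d,
      HasGradientAt (fun z => v0 σ π z) ((σ ^ 2)⁻¹ • (v1 σ π y - v0 σ π y • y)) y) ∧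
    (π ≠ 0 →
      (∀ y : Euc d, 0 < v0 σ π y) ∧
      ∀ y : Euc d,
        σ ^ 2 • gradient (fun z => Real.log (v0 σ π z)) y =
          (v0 σ π y)⁻¹ • v1 σ π y - y) := by
  refine ⟨hasGradientAt_v0 σ hπ, fun hπ0 => ⟨v0_pos σ hπ0, fun y => ?_⟩⟩
  have hv0 := (v0_pos σ hπ0 y).ne'
  rw [((hasGradientAt_v0 σ hπ y).log hv0).gradient, smul_smul, smul_smul, mul_right_comm,
    mul_inv_cancel₀ (by positivity), one_mul, smul_sub, smul_smul, inv_mul_cancel₀ hv0, one_smul]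

/-- `v0` is differentiable with `∇v0(y) = σ⁻²(v1(y) − y v0(y))`;
consequently, if `π ≠ 0` then `v0 > 0` everywhere and
`σ² ∇(log v0)(y) = v1(y)/v0(y) − y`. -/
theorem v0_gradient
    (d : ℕ) (hd : 1 ≤ d) (σ : ℝ) (hσ : 0 < σ)
    (π : Measure (Euc d)) [IsFiniteMeasure π] (hπ : Integrable (fun x => ‖x‖) π) :
    (∀ y : Euc d,
      HasGradientAt (fun z => v0 σ π z) ((σ ^ 2)⁻¹ • (v1 σ π y - v0 σ π y • y)) y) ∧
    (π ≠ 0 →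
      (∀ y : Euc d, 0 < v0 σ π y) ∧
      ∀ y : Euc d,
        σ ^ 2 • gradient (fun z => Real.log (v0 σ π z)) y =
          (v0 σ π y)⁻¹ • v1 σ π y - y) :=
  v0_gradient_general d σ hσ π hπ
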